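/- Let J be a nondegenerate interval and (J, f_{1,∞}) a commutative m-periodic non-autonomous system of continuous surjections. If (J, f_{1,∞}) is weakly mixing, then it is Devaney chaotic: topologically transitive, has a dense set of periodic points, and is sensitive. -/

import Mathlib

open Set Filter MeasureTheory TopologicalSpace

/-- `iterN f n = f_{n-1} ∘ ⋯ ∘ f_0`, the `n`-th iterate of the non-autonomous system. -/
def iterN {X : Type*} (f : ℕ → X → X) : ℕ → X → X
  | 0 => id
  | n + 1 => f n ∘ iterN f n

/-- Topological transitivity of a non-autonomous system. -/
def NATransitive {X : Type*} [TopologicalSpace X] (f : ℕ → X → X) : Prop :=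
  ∀ U V : Set X, IsOpen U → IsOpen V → U.Nonempty → V.Nonempty →
    ∃ n : ℕ, 0 < n ∧ (iterN f n '' U ∩ V).Nonempty

/-- Weak mixing (order 2). -/
def NAWeaklyMixing {X : Type*} [TopologicalSpace X] (f : ℕ → X → X) : Prop :=
  ∀ U₁ U₂ V₁ V₂ : Set X, IsOpen U₁ → IsOpen U₂ → IsOpen V₁ → IsOpen V₂ →
    U₁.Nonempty → U₂.Nonempty → V₁.Nonempty → V₂.Nonempty →
    ∃ n : ℕ, 0 < n ∧ (iterN f n '' U₁ ∩ V₁).Nonempty ∧ (iterN f n '' U₂ ∩ V₂).Nonempty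

/-- Weak mixing of order `m`. -/
def NAWeaklyMixingOrder {X : Type*} [TopologicalSpace X] (f : ℕ → X → X) (m : ℕ) : Prop :=
  ∀ U V : Fin m → Set X, (∀ i, IsOpen (U i)) → (∀ i, IsOpen (V i)) →
    (∀ i, (U i).Nonempty) → (∀ i, (V i).Nonempty) →
    ∃ n : ℕ, 0 < n ∧ ∀ i, (iterN f n '' U i ∩ V i).Nonempty

/-- Banks's condition. -/
def NABanks {X : Type*} [TopologicalSpace X] (f : ℕ → X → X) : Prop :=
  ∀ U V W : Set X, IsOpen U → IsOpen V → IsOpen W →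
    U.Nonempty → V.Nonempty → W.Nonempty →
    ∃ n : ℕ, 0 < n ∧ (iterN f n '' U ∩ V).Nonempty ∧ (iterN f n '' U ∩ W).Nonempty

/-- Topological mixing. -/
def NAMixing {X : Type*} [TopologicalSpace X] (f : ℕ → X → X) : Prop :=
  ∀ U V : Set X, IsOpen U → IsOpen V → U.Nonempty → V.Nonempty →
    ∃ N : ℕ, ∀ n ≥ N, (iterN f n '' U ∩ V).Nonempty

/-- `blockC f s k = f_{s+k-1} ∘ ⋯ ∘ f_s`. -/
def blockC {X : Type*} (f : ℕ → X → X) (s k : ℕ) : X → X :=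
  iterN (fun i => f (s + i)) k

/-- The `k`-th iterate system `f_{1,∞}^{[k]}`. -/
def kthSys {X : Type*} (f : ℕ → X → X) (k : ℕ) : ℕ → X → X :=
  fun n => blockC f (n * k) k

/-- The induced non-autonomous system on Borel probability measures (pushforwards). -/
noncomputable def inducedM {X : Type*} [MeasurableSpace X] [TopologicalSpace X]
    [BorelSpace X] (f : ℕ → X → X) (hf : ∀ n, Continuous (f n)) :
    ℕ → ProbabilityMeasure X → ProbabilityMeasure X :=
  fun n μ => μ.map ((hf n).measurable.aemeasurable)

/-- The induced non-autonomous system on the hyperspace of non-empty compact subsets. -/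
def inducedK {X : Type*} [TopologicalSpace X] (f : ℕ → X → X) (hf : ∀ n, Continuous (f n)) :
    ℕ → NonemptyCompacts X → NonemptyCompacts X :=
  fun n K => ⟨⟨f n '' (K : Set X), K.isCompact.image (hf n)⟩, K.nonempty.image _⟩

/-- The set `N(U, δ)` of sensitivity times. -/
def NSet {X : Type*} [PseudoMetricSpace X] (f : ℕ → X → X) (U : Set X) (δ : ℝ) : Set ℕ :=
  {n | 0 < n ∧ ∃ x ∈ U, ∃ y ∈ U, δ < dist (iterN f n x) (iterN f n y)}

/-- Sensitive dependence on initial conditions. -/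
def NASensitive {X : Type*} [PseudoMetricSpace X] (f : ℕ → X → X) : Prop :=
  ∃ δ : ℝ, 0 < δ ∧ ∀ x : X, ∀ U : Set X, IsOpen U → x ∈ U →
    ∃ y ∈ U, ∃ n : ℕ, 0 < n ∧ δ < dist (iterN f n x) (iterN f n y)

/-- A thick subset of ℕ. -/
def ThickSet (S : Set ℕ) : Prop := ∀ p : ℕ, ∃ n : ℕ, ∀ j ≤ p, n + j ∈ S

/-- A syndetic subset of ℕ. -/
def SyndeticSet (S : Set ℕ) : Prop := ∃ a : ℕ, ∀ i : ℕ, ∃ j, i ≤ j ∧ j ≤ i + a ∧ j ∈ S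

/-- Upper density of a subset of ℕ. -/
noncomputable def upperDens (S : Set ℕ) : ℝ :=
  Filter.limsup (fun n : ℕ => (Nat.card ↥(S ∩ Set.Iio n) : ℝ) / n) Filter.atTop

/-- Periodic point of a non-autonomous system. -/
def NAPeriodicPt {X : Type*} (f : ℕ → X → X) (x : X) : Prop :=
  ∃ n : ℕ, 0 < n ∧ ∀ k : ℕ, 0 < k → iterN f (n * k) x = x

/-!
Write `g = f_m ∘ ⋯ ∘ f_1`. Periodicity and commutativity give `f_1^n = g^q ∘ f_1^r` for
`n = qm + r`. By Furstenberg's intersection lemma, weak mixing of the system yields a common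
hitting time for any finite family of pairs of open sets; for the pairs `(f_1^{-r} U, g^{-1} V)`,
`r < m`, such a time `n` shows that `g^(n/m + 1)` sends a point of `U` into `V`, so `g` is
weakly mixing. Given an open interval `(a, b)` and a midpoint `c`, some iterate of `g` then sends
a point of `(a, c)` into `(c, b)` and a point of `(c, b)` into `(a, c)`, and the intermediate
value theorem gives a fixed point of that iterate in `(a, b)`. Sensitivity holds for every weakly
mixing system on a metric space with two distinct points `p`, `q`: every open set reaches the
neighbourhoods of `p` and `q` at a common time.
-/

open Set Function Topology

section NonAutonomous

variable {X : Type*} {f : ℕ → X → X}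

theorem iterN_add (a b : ℕ) : iterN f (a + b) = blockC f a b ∘ iterN f a := by
  induction b with
  | zero => rfl
  | succ b ih =>
    show f (a + b) ∘ iterN f (a + b) = f (a + b) ∘ blockC f a b ∘ iterN f a
    rw [ih]

theorem iterN_const (g : X → X) (n : ℕ) : iterN (fun _ => g) n = g^[n] := by
  induction n with
  | zero => rfl
  | succ n ih =>
    rw [iterate_succ']
    exact congrArg (g ∘ ·) ih

theorem continuous_iterN [TopologicalSpace X] (hf : ∀ n, Continuous (f n)) :
    ∀ n, Continuous (iterN f n)
  | 0 => continuous_id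
  | n + 1 => (hf n).comp (continuous_iterN hf n)

theorem surjective_iterN (hf : ∀ n, Surjective (f n)) : ∀ n, Surjective (iterN f n)
  | 0 => surjective_id
  | n + 1 => (hf n).comp (surjective_iterN hf n)

theorem commute_iterN_right (hc : ∀ i j, Function.Commute (f i) (f j)) (i : ℕ) :
    ∀ n, Function.Commute (f i) (iterN f n)
  | 0 => Function.Commute.id_right
  | n + 1 => (hc i n).comp_right (commute_iterN_right hc i n)

theorem commute_iterN (hc : ∀ i j, Function.Commute (f i) (f j)) (k : ℕ) :
    ∀ n, Function.Commute (iterN f n) (iterN f k)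
  | 0 => Function.Commute.id_left
  | n + 1 => (commute_iterN_right hc n k).comp_left (commute_iterN hc k n)

variable {m : ℕ}

theorem blockC_mul_eq_iterN (hper : Periodic f m) (q r : ℕ) : blockC f (q * m) r = iterN f r := by
  have hshift : (fun i => f (q * m + i)) = f := funext fun i => by
    rw [add_comm]
    simpa using hper.nat_mul q i
  rw [blockC, hshift]

theorem iterN_mul_eq_iterate (hper : Periodic f m) (q : ℕ) : iterN f (q * m) = (iterN f m)^[q] := by
  induction q with
  | zero => simp [iterN]
  | succ q ih => rw [Nat.succ_mul, iterN_add, ih, blockC_mul_eq_iterN hper, iterate_succ']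

theorem iterN_eq_iterate_comp (hper : Periodic f m) (hc : ∀ i j, Function.Commute (f i) (f j))
    (n : ℕ) : iterN f n = (iterN f m)^[n / m] ∘ iterN f (n % m) := by
  conv_lhs => rw [← Nat.div_add_mod' n m]
  rw [iterN_add, blockC_mul_eq_iterN hper, (commute_iterN hc _ _).comp_eq,
    iterN_mul_eq_iterate hper]

theorem periodicPts_iterN_subset (hm : 0 < m) (hper : Periodic f m) :
    periodicPts (iterN f m) ⊆ {x | NAPeriodicPt f x} := by
  rintro x ⟨Q, hQ, hx⟩
  refine ⟨Q * m, Nat.mul_pos hQ hm, fun k _ => ?_⟩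
  rw [mul_right_comm, iterN_mul_eq_iterate hper]
  exact (hx.mul_const k).eq

/-- The hitting-time set `N(U, V)`. -/
def hitTimes (f : ℕ → X → X) (U V : Set X) : Set ℕ :=
  {n | (iterN f n '' U ∩ V).Nonempty}

theorem hitTimes_mono {U U' V V' : Set X} (hU : U ⊆ U') (hV : V ⊆ V') :
    hitTimes f U V ⊆ hitTimes f U' V' :=
  fun _ hn => hn.mono (inter_subset_inter (image_mono hU) hV)

theorem succ_div_mem_hitTimes_iterN (hper : Periodic f m) (hc : ∀ i j, Function.Commute (f i) (f j))
    {U V : Set X} {n : ℕ} (hn : n ∈ hitTimes f (iterN f (n % m) ⁻¹' U) (iterN f m ⁻¹' V)) :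
    n / m + 1 ∈ hitTimes (fun _ => iterN f m) U V := by
  obtain ⟨_, ⟨x, hx, rfl⟩, hxV⟩ := hn
  refine ⟨_, ⟨iterN f (n % m) x, hx, rfl⟩, ?_⟩
  rw [iterN_const, iterate_succ_apply']
  rwa [iterN_eq_iterate_comp hper hc n] at hxV

end NonAutonomous

namespace NAWeaklyMixing

variable {X : Type*} [TopologicalSpace X] {f : ℕ → X → X}

theorem naTransitive (h : NAWeaklyMixing f) : NATransitive f := fun U V hU hV hU' hV' =>
  let ⟨n, hn, hit, _⟩ := h U U V V hU hU hV hV hU' hU' hV' hV'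
  ⟨n, hn, hit⟩

/-- Furstenberg's intersection lemma. -/
theorem exists_hitTimes_subset (h : NAWeaklyMixing f) (hf : ∀ n, Continuous (f n))
    (hc : ∀ i j, Function.Commute (f i) (f j)) {U₁ V₁ U₂ V₂ : Set X}
    (hU₁ : IsOpen U₁) (hV₁ : IsOpen V₁) (hU₂ : IsOpen U₂) (hV₂ : IsOpen V₂)
    (hU₁' : U₁.Nonempty) (hV₁' : V₁.Nonempty) (hU₂' : U₂.Nonempty) (hV₂' : V₂.Nonempty) :
    ∃ U ⊆ U₁, ∃ V ⊆ V₁, IsOpen U ∧ IsOpen V ∧ U.Nonempty ∧ V.Nonempty ∧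
      hitTimes f U V ⊆ hitTimes f U₂ V₂ := by
  obtain ⟨n, -, ⟨_, ⟨x, hx, rfl⟩, hxU⟩, ⟨_, ⟨y, hy, rfl⟩, hyV⟩⟩ :=
    h U₁ V₁ U₂ V₂ hU₁ hV₁ hU₂ hV₂ hU₁' hV₁' hU₂' hV₂'
  refine ⟨U₁ ∩ iterN f n ⁻¹' U₂, inter_subset_left, V₁ ∩ iterN f n ⁻¹' V₂, inter_subset_left,
    hU₁.inter (hU₂.preimage (continuous_iterN hf n)),
    hV₁.inter (hV₂.preimage (continuous_iterN hf n)), ⟨x, hx, hxU⟩, ⟨y, hy, hyV⟩, ?_⟩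
  rintro k ⟨_, ⟨z, hz, rfl⟩, hzV⟩
  exact ⟨iterN f k (iterN f n z), ⟨iterN f n z, hz.2, rfl⟩, commute_iterN hc k n z ▸ hzV.2⟩

theorem exists_mem_hitTimes_of_finset (h : NAWeaklyMixing f) (hf : ∀ n, Continuous (f n))
    (hc : ∀ i j, Function.Commute (f i) (f j)) {ι : Type*} {U V : ι → Set X}
    (hU : ∀ i, IsOpen (U i)) (hV : ∀ i, IsOpen (V i))
    (hU' : ∀ i, (U i).Nonempty) (hV' : ∀ i, (V i).Nonempty) (s : Finset ι) {U₀ V₀ : Set X}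
    (hU₀ : IsOpen U₀) (hV₀ : IsOpen V₀) (hU₀' : U₀.Nonempty) (hV₀' : V₀.Nonempty) :
    ∃ n, 0 < n ∧ n ∈ hitTimes f U₀ V₀ ∧ ∀ i ∈ s, n ∈ hitTimes f (U i) (V i) := by
  classical
  induction s using Finset.induction_on generalizing U₀ V₀ with
  | empty =>
    obtain ⟨n, hn, hit, -⟩ := h U₀ U₀ V₀ V₀ hU₀ hU₀ hV₀ hV₀ hU₀' hU₀' hV₀' hV₀'
    exact ⟨n, hn, hit, by simp⟩
  | insert j s _ ih =>
    obtain ⟨U, hUU₀, V, hVV₀, hUo, hVo, hUne, hVne, hsub⟩ :=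
      h.exists_hitTimes_subset hf hc hU₀ hV₀ (hU j) (hV j) hU₀' hV₀' (hU' j) (hV' j)
    obtain ⟨n, hn, hit, hall⟩ := ih hUo hVo hUne hVne
    refine ⟨n, hn, hitTimes_mono hUU₀ hVV₀ hit, ?_⟩
    simpa only [Finset.forall_mem_insert] using ⟨hsub hit, hall⟩

theorem exists_forall_mem_hitTimes (h : NAWeaklyMixing f) (hf : ∀ n, Continuous (f n))
    (hc : ∀ i j, Function.Commute (f i) (f j)) {ι : Type*} [Finite ι] {U V : ι → Set X}
    (hU : ∀ i, IsOpen (U i)) (hV : ∀ i, IsOpen (V i))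
    (hU' : ∀ i, (U i).Nonempty) (hV' : ∀ i, (V i).Nonempty) :
    ∃ n, 0 < n ∧ ∀ i, n ∈ hitTimes f (U i) (V i) := by
  cases nonempty_fintype ι
  rcases isEmpty_or_nonempty ι with hι | ⟨⟨i₀⟩⟩
  · exact ⟨1, one_pos, isEmptyElim⟩
  · obtain ⟨n, hn, -, hall⟩ := h.exists_mem_hitTimes_of_finset hf hc hU hV hU' hV' Finset.univ
      (hU i₀) (hV i₀) (hU' i₀) (hV' i₀)
    exact ⟨n, hn, fun i => hall i (Finset.mem_univ i)⟩

theorem const_iterN_of_periodic (h : NAWeaklyMixing f) (hf : ∀ n, Continuous (f n))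
    (hsurj : ∀ n, Surjective (f n)) (hc : ∀ i j, Function.Commute (f i) (f j)) {m : ℕ} (hm : 0 < m)
    (hper : Periodic f m) : NAWeaklyMixing fun _ => iterN f m := by
  intro U₁ U₂ V₁ V₂ hU₁ hU₂ hV₁ hV₂ hU₁' hU₂' hV₁' hV₂'
  have hU : ∀ i, IsOpen (![U₁, U₂] i) := Fin.forall_fin_two.2 ⟨hU₁, hU₂⟩
  have hV : ∀ i, IsOpen (![V₁, V₂] i) := Fin.forall_fin_two.2 ⟨hV₁, hV₂⟩
  have hU' : ∀ i, (![U₁, U₂] i).Nonempty := Fin.forall_fin_two.2 ⟨hU₁', hU₂'⟩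
  have hV' : ∀ i, (![V₁, V₂] i).Nonempty := Fin.forall_fin_two.2 ⟨hV₁', hV₂'⟩
  obtain ⟨n, -, hall⟩ := h.exists_forall_mem_hitTimes hf hc (ι := Fin m × Fin 2)
    (U := fun p => iterN f p.1 ⁻¹' ![U₁, U₂] p.2) (V := fun p => iterN f m ⁻¹' ![V₁, V₂] p.2)
    (fun p => (hU p.2).preimage (continuous_iterN hf _))
    (fun p => (hV p.2).preimage (continuous_iterN hf _))
    (fun p => (hU' p.2).preimage (surjective_iterN hsurj _))
    (fun p => (hV' p.2).preimage (surjective_iterN hsurj _))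
  let r : Fin m := ⟨n % m, Nat.mod_lt n hm⟩
  exact ⟨n / m + 1, Nat.succ_pos _, succ_div_mem_hitTimes_iterN hper hc (hall (r, 0)),
    succ_div_mem_hitTimes_iterN hper hc (hall (r, 1))⟩

end NAWeaklyMixing

theorem NAWeaklyMixing.naSensitive {X : Type*} [MetricSpace X] [Nontrivial X] {f : ℕ → X → X}
    (h : NAWeaklyMixing f) : NASensitive f := by
  obtain ⟨p, q, hpq⟩ := exists_pair_ne X
  have hD : 0 < dist p q := dist_pos.2 hpq
  refine ⟨dist p q / 4, by positivity, fun x U hU hx => ?_⟩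
  obtain ⟨n, hn, ⟨_, ⟨y, hy, rfl⟩, hyp⟩, ⟨_, ⟨z, hz, rfl⟩, hzq⟩⟩ :=
    h U U (Metric.ball p (dist p q / 8)) (Metric.ball q (dist p q / 8)) hU hU
      Metric.isOpen_ball Metric.isOpen_ball ⟨x, hx⟩ ⟨x, hx⟩
      (Metric.nonempty_ball.2 (by positivity)) (Metric.nonempty_ball.2 (by positivity))
  by_contra! hnear
  rw [Metric.mem_ball, dist_comm] at hyp
  rw [Metric.mem_ball] at hzq
  have hxy := hnear y hy n hn
  have hxz := hnear z hz n hn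
  have hchain := dist_triangle4 p (iterN f n y) (iterN f n z) q
  have hdetour := dist_triangle_left (iterN f n y) (iterN f n z) (iterN f n x)
  linarith

theorem exists_mem_periodicPts_of_naWeaklyMixing {X : Type*} [TopologicalSpace X] [LinearOrder X]
    [OrderClosedTopology X] {g : X → X} (hg : Continuous g) (h : NAWeaklyMixing fun _ => g)
    {A B C : Set X} (hA : IsOpen A) (hB : IsOpen B) (hA' : A.Nonempty) (hB' : B.Nonempty)
    (hAB : ∀ a ∈ A, ∀ b ∈ B, a < b) (hAC : A ⊆ C) (hBC : B ⊆ C) (hC : IsPreconnected C) :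
    ∃ z ∈ C, z ∈ periodicPts g := by
  obtain ⟨Q, hQ, ⟨_, ⟨x, hx, rfl⟩, hxB⟩, ⟨_, ⟨y, hy, rfl⟩, hyA⟩⟩ :=
    h A B B A hA hB hB hA hA' hB' hB' hA'
  rw [iterN_const] at hxB hyA
  obtain ⟨z, hz, hfix⟩ := hC.intermediate_value₂ (hBC hy) (hAC hx) (hg.iterate Q).continuousOn
    continuousOn_id (hAB _ hyA _ hy).le (hAB _ hx _ hxB).le
  exact ⟨z, hz, Q, hQ, hfix⟩

theorem dense_periodicPts_of_naWeaklyMixing {α : Type*} [ConditionallyCompleteLinearOrder α]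
    [DenselyOrdered α] [TopologicalSpace α] [OrderTopology α] {s : Set α} [s.OrdConnected]
    [Nontrivial s] {g : s → s} (hg : Continuous g) (h : NAWeaklyMixing fun _ => g) :
    Dense (periodicPts g) := by
  refine dense_iff_inter_open.2 fun W hW hne => ?_
  obtain ⟨a, b, hab, hsub⟩ := hW.exists_Ioo_subset hne
  obtain ⟨c, hac, hcb⟩ := exists_between hab
  have hC : IsPreconnected (Ioo a b) := IsInducing.subtypeVal.isPreconnected_image.1 <| by
    rw [image_subtype_val_Ioo]
    exact isPreconnected_Ioo
  obtain ⟨z, hz, hzper⟩ := exists_mem_periodicPts_of_naWeaklyMixing hg h isOpen_Ioo isOpen_Ioo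
    (nonempty_Ioo.2 hac) (nonempty_Ioo.2 hcb) (fun _ hx _ hy => hx.2.trans hy.1)
    (Ioo_subset_Ioo_right hcb.le) (Ioo_subset_Ioo_left hac.le) hC
  exact ⟨z, hsub hz, hzper⟩

/-- a commutative `m`-periodic weakly mixing non-autonomous system of
continuous surjections on a nondegenerate interval is Devaney chaotic. -/
theorem interval_periodic_commutative_weaklyMixing_devaney {J : Set ℝ}
    (hJconn : J.OrdConnected) (hJ2 : ∃ a ∈ J, ∃ b ∈ J, a ≠ b)
    (f : ℕ → J → J) (hf : ∀ n, Continuous (f n))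
    (hsurj : ∀ n, Function.Surjective (f n))
    (hc : ∀ i j, f i ∘ f j = f j ∘ f i) (m : ℕ) (hm : 0 < m)
    (hper : ∀ n, f (n + m) = f n) (h : NAWeaklyMixing f) :
    NATransitive f ∧ Dense {x : J | NAPeriodicPt f x} ∧ NASensitive f := by
  obtain ⟨a, ha, b, hb, hab⟩ := hJ2
  have : Nontrivial J := ⟨⟨a, ha⟩, ⟨b, hb⟩, fun hab' => hab (congrArg Subtype.val hab')⟩
  have hcomm : ∀ i j, Function.Commute (f i) (f j) := fun i j => congrFun (hc i j)
  have hg : NAWeaklyMixing fun _ => iterN f m := h.const_iterN_of_periodic hf hsurj hcomm hm hper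
  refine ⟨h.naTransitive, ?_, h.naSensitive⟩
  exact (dense_periodicPts_of_naWeaklyMixing (s := J) (continuous_iterN hf m) hg).mono
    (periodicPts_iterN_subset hm hper)
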